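/- Let W ∈ ℝ^{N×N} be symmetric doubly stochastic with nonnegative entries, φ(x) := (1/4)∑_{i,j} W_{ij}‖x_i − x_j‖_F² for x = (x_1,...,x_N) ∈ St(d,r)^N, and grad φ the Riemannian gradient (blockwise projection of the Euclidean gradient onto tangent spaces). Then for all x, y ∈ St(d,r)^N: ⟨grad φ(x), y − x⟩ = ⟨∇φ(x), y − x⟩ + (1/4)∑_i ⟨∑_j W_{ij}(x_i − x_j)ᵀ(x_i − x_j), (y_i − x_i)ᵀ(y_i − x_i)⟩ ≥ ⟨∇φ(x), y − x⟩. -/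

import Mathlib

/-! On the Stiefel manifold `xᵀx = 1`, so the normal part of the Euclidean gradient is
`x S` with `S = xᵀe + eᵀx` symmetric, and for `y` also on the manifold
`⟨x S, y - x⟩ = tr S (xᵀy - 1) = -½ ⟨S, (y - x)ᵀ(y - x)⟩`. For the consensus potential the
row sums of `W` give `S = ∑ⱼ Wᵢⱼ (xᵢ - xⱼ)ᵀ(xᵢ - xⱼ)`, a nonnegative combination of Gram
matrices, and the trace of a product of two Gram matrices is a squared Frobenius norm. -/

open Matrix BigOperators Finset

noncomputable def fnorm {d r : ℕ} (A : Matrix (Fin d) (Fin r) ℝ) : ℝ :=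
  Real.sqrt (∑ i, ∑ j, (A i j) ^ 2)

def ip {d r : ℕ} (A B : Matrix (Fin d) (Fin r) ℝ) : ℝ :=
  ∑ i, ∑ j, A i j * B i j

def Stiefel (d r : ℕ) : Set (Matrix (Fin d) (Fin r) ℝ) :=
  {x | xᵀ * x = 1}

section InnerProduct

variable {d r : ℕ}

lemma ip_eq_trace (A B : Matrix (Fin d) (Fin r) ℝ) : ip A B = (Aᵀ * B).trace := by
  simp only [ip, trace, Matrix.diag, mul_apply, transpose_apply]
  rw [Finset.sum_comm]

lemma ip_self_nonneg (A : Matrix (Fin d) (Fin r) ℝ) : 0 ≤ ip A A :=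
  sum_nonneg fun _ _ => sum_nonneg fun _ _ => mul_self_nonneg _

lemma ip_sub_left (A B C : Matrix (Fin d) (Fin r) ℝ) : ip (A - B) C = ip A C - ip B C := by
  simp [ip_eq_trace, transpose_sub, Matrix.sub_mul]

lemma ip_smul_left (c : ℝ) (A B : Matrix (Fin d) (Fin r) ℝ) : ip (c • A) B = c * ip A B := by
  simp [ip, mul_sum, mul_assoc]

lemma ip_sum_left {ι : Type*} (s : Finset ι) (f : ι → Matrix (Fin d) (Fin r) ℝ)
    (B : Matrix (Fin d) (Fin r) ℝ) : ip (∑ j ∈ s, f j) B = ∑ j ∈ s, ip (f j) B := by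
  simp [ip_eq_trace, transpose_sum, Matrix.sum_mul, trace_sum]

lemma ip_gram_gram_nonneg {n : ℕ} (A : Matrix (Fin n) (Fin r) ℝ)
    (B : Matrix (Fin d) (Fin r) ℝ) : 0 ≤ ip (Aᵀ * A) (Bᵀ * B) := by
  have h : ip (Aᵀ * A) (Bᵀ * B) = ip (A * Bᵀ) (A * Bᵀ) := by
    rw [ip_eq_trace, ip_eq_trace, transpose_mul, transpose_transpose, transpose_mul,
      transpose_transpose, ← Matrix.mul_assoc, trace_mul_cycle]
    simp only [Matrix.mul_assoc]
  exact h ▸ ip_self_nonneg _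

lemma ip_weighted_gram_nonneg {ι : Type*} {n : ℕ} (s : Finset ι) (w : ι → ℝ)
    (hw : ∀ j ∈ s, 0 ≤ w j) (A : ι → Matrix (Fin n) (Fin r) ℝ)
    (B : Matrix (Fin d) (Fin r) ℝ) : 0 ≤ ip (∑ j ∈ s, w j • ((A j)ᵀ * A j)) (Bᵀ * B) := by
  rw [ip_sum_left]
  exact sum_nonneg fun j hj => by
    rw [ip_smul_left]
    exact mul_nonneg (hw j hj) (ip_gram_gram_nonneg _ _)

end InnerProduct

section Stiefel

variable {d r : ℕ}

lemma gram_sub_of_mem_stiefel {u v : Matrix (Fin d) (Fin r) ℝ} (hu : u ∈ Stiefel d r)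
    (hv : v ∈ Stiefel d r) : (u - v)ᵀ * (u - v) = 2 - uᵀ * v - vᵀ * u := by
  rw [transpose_sub, Matrix.sub_mul, Matrix.mul_sub, Matrix.mul_sub, hu.out, hv.out,
    ← one_add_one_eq_two]
  abel

lemma ip_mul_sub_of_mem_stiefel {x y : Matrix (Fin d) (Fin r) ℝ} (hx : x ∈ Stiefel d r)
    (hy : y ∈ Stiefel d r) {S : Matrix (Fin r) (Fin r) ℝ} (hS : S.IsSymm) :
    ip (x * S) (y - x) = -(1 / 2) * ip S ((y - x)ᵀ * (y - x)) := by
  have htr : (S * (yᵀ * x)).trace = (S * (xᵀ * y)).trace := by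
    rw [← trace_transpose (S * (yᵀ * x)), transpose_mul, transpose_mul, transpose_transpose,
      hS.eq, trace_mul_comm]
  have htwo : (S * 2).trace = 2 * S.trace := by
    rw [← one_add_one_eq_two, Matrix.mul_add, Matrix.mul_one, trace_add, two_mul]
  rw [ip_eq_trace, ip_eq_trace, transpose_mul, hS.eq, Matrix.mul_assoc, Matrix.mul_sub, hx.out,
    gram_sub_of_mem_stiefel hy hx]
  simp only [Matrix.mul_sub, Matrix.mul_one, trace_sub, htr, htwo]
  ring

lemma ip_tangentProj_sub_of_mem_stiefel {x y : Matrix (Fin d) (Fin r) ℝ}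
    (hx : x ∈ Stiefel d r) (hy : y ∈ Stiefel d r) (e : Matrix (Fin d) (Fin r) ℝ) :
    ip (e - ((1 : ℝ) / 2) • (x * (xᵀ * e + eᵀ * x))) (y - x)
      = ip e (y - x) + (1 / 4) * ip (xᵀ * e + eᵀ * x) ((y - x)ᵀ * (y - x)) := by
  have hS : (xᵀ * e + eᵀ * x).IsSymm := by
    simp only [IsSymm, transpose_add, transpose_mul, transpose_transpose, add_comm]
  rw [ip_sub_left, ip_smul_left, ip_mul_sub_of_mem_stiefel hx hy hS]
  ring

lemma symm_mul_sub_weighted_sum_of_mem_stiefel {ι : Type*} (s : Finset ι) (w : ι → ℝ)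
    (hw : ∑ j ∈ s, w j = 1) {u : Matrix (Fin d) (Fin r) ℝ} (hu : u ∈ Stiefel d r)
    {v : ι → Matrix (Fin d) (Fin r) ℝ} (hv : ∀ j ∈ s, v j ∈ Stiefel d r) :
    uᵀ * (u - ∑ j ∈ s, w j • v j) + (u - ∑ j ∈ s, w j • v j)ᵀ * u
      = ∑ j ∈ s, w j • ((u - v j)ᵀ * (u - v j)) := by
  have hexpand : ∑ j ∈ s, w j • ((u - v j)ᵀ * (u - v j))
      = ∑ j ∈ s, w j • (2 : Matrix (Fin r) (Fin r) ℝ)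
        - ∑ j ∈ s, w j • (uᵀ * v j) - ∑ j ∈ s, w j • ((v j)ᵀ * u) := by
    rw [← sum_sub_distrib, ← sum_sub_distrib]
    refine sum_congr rfl fun j hj => ?_
    rw [gram_sub_of_mem_stiefel hu (hv j hj), smul_sub, smul_sub]
  rw [hexpand, ← sum_smul, hw, one_smul, Matrix.mul_sub, transpose_sub, Matrix.sub_mul, hu.out,
    transpose_sum, Matrix.mul_sum, Matrix.sum_mul, ← one_add_one_eq_two]
  simp only [Matrix.mul_smul, Matrix.smul_mul, transpose_smul]
  abel

end Stiefel

theorem stmt7_general {N d r : ℕ} (W : Matrix (Fin N) (Fin N) ℝ)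
    (hnn : ∀ i j, 0 ≤ W i j) (hrow : ∀ i, ∑ j, W i j = 1)
    (x y : Fin N → Matrix (Fin d) (Fin r) ℝ)
    (hx : ∀ i, x i ∈ Stiefel d r) (hy : ∀ i, y i ∈ Stiefel d r)
    (egrad : Fin N → Matrix (Fin d) (Fin r) ℝ)
    (hegrad : ∀ i, egrad i = x i - ∑ j, W i j • x j)
    (rgrad : Fin N → Matrix (Fin d) (Fin r) ℝ)
    (hrgrad : ∀ i, rgrad i =
      egrad i - ((1 : ℝ) / 2) • (x i * ((x i)ᵀ * egrad i + (egrad i)ᵀ * x i))) :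
    (∑ i, ip (rgrad i) (y i - x i) =
        ∑ i, ip (egrad i) (y i - x i) +
          (1 / 4) * ∑ i, ip (∑ j, W i j • ((x i - x j)ᵀ * (x i - x j)))
            ((y i - x i)ᵀ * (y i - x i))) ∧
      ∑ i, ip (egrad i) (y i - x i) ≤ ∑ i, ip (rgrad i) (y i - x i) := by
  have hblock : ∀ i, ip (rgrad i) (y i - x i) = ip (egrad i) (y i - x i)
      + (1 / 4) * ip (∑ j, W i j • ((x i - x j)ᵀ * (x i - x j))) ((y i - x i)ᵀ * (y i - x i)) := by
    intro i
    rw [hrgrad i, ip_tangentProj_sub_of_mem_stiefel (hx i) (hy i), hegrad i,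
      symm_mul_sub_weighted_sum_of_mem_stiefel _ _ (hrow i) (hx i) fun j _ => hx j]
  have hsum : ∑ i, ip (rgrad i) (y i - x i) = ∑ i, ip (egrad i) (y i - x i)
      + (1 / 4) * ∑ i, ip (∑ j, W i j • ((x i - x j)ᵀ * (x i - x j)))
          ((y i - x i)ᵀ * (y i - x i)) := by
    rw [sum_congr rfl fun i _ => hblock i, sum_add_distrib, mul_sum]
  have hnonneg : 0 ≤ ∑ i, ip (∑ j, W i j • ((x i - x j)ᵀ * (x i - x j)))
      ((y i - x i)ᵀ * (y i - x i)) :=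
    sum_nonneg fun i _ => ip_weighted_gram_nonneg _ _ (fun j _ => hnn i j) _ _
  exact ⟨hsum, by rw [hsum]; linarith⟩

theorem stmt7 {N d r : ℕ} (W : Matrix (Fin N) (Fin N) ℝ)
    (hsymm : W.IsSymm) (hnn : ∀ i j, 0 ≤ W i j) (hrow : ∀ i, ∑ j, W i j = 1)
    (x y : Fin N → Matrix (Fin d) (Fin r) ℝ)
    (hx : ∀ i, x i ∈ Stiefel d r) (hy : ∀ i, y i ∈ Stiefel d r)
    (egrad : Fin N → Matrix (Fin d) (Fin r) ℝ)
    (hegrad : ∀ i, egrad i = x i - ∑ j, W i j • x j)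
    (rgrad : Fin N → Matrix (Fin d) (Fin r) ℝ)
    (hrgrad : ∀ i, rgrad i =
      egrad i - ((1 : ℝ) / 2) • (x i * ((x i)ᵀ * egrad i + (egrad i)ᵀ * x i))) :
    (∑ i, ip (rgrad i) (y i - x i) =
        ∑ i, ip (egrad i) (y i - x i) +
          (1 / 4) * ∑ i, ip (∑ j, W i j • ((x i - x j)ᵀ * (x i - x j)))
            ((y i - x i)ᵀ * (y i - x i))) ∧
      ∑ i, ip (egrad i) (y i - x i) ≤ ∑ i, ip (rgrad i) (y i - x i) :=
  stmt7_general W hnn hrow x y hx hy egrad hegrad rgrad hrgrad
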